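/- Let 1 ≤ k < n, let X_1, ..., X_n be Polish spaces, and let μ be a reducible Borel probability measure on X = ∏_{i=1}^n X_i; for each subset α of size k write μ_α = (pr_α)_*μ. Then there exists a constant C_μ such that for every finite (n,k)-function F ∈ L¹(X, μ) there exists a family of functions f̂_α ∈ L¹(X_α, μ_α), indexed by subsets α of size k, with F(x) = Σ_α f̂_α(x_α) for all x ∈ X and ‖f̂_α‖_{L¹(μ_α)} ≤ C_μ · ‖F‖_{L¹(μ)} for all α. -/

import Mathlib

/-!
Fix an anchor point `z` and write `(x_s, z_sᶜ)` for `s.piecewise x z`. The anchored ANOVA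
components `Δ_t F x = ∑_{s ⊆ t} (-1)^|t \ s| F (x_s, z_sᶜ)` are the Möbius transform of
`s ↦ F (x_s, z_sᶜ)`, so `F = ∑_t Δ_t F` pointwise; `Δ_t F` depends only on `x_t`, and it vanishes
as soon as `F` does not depend on some coordinate in `t`. For a finite `(n,k)`-function this kills
every `t` with `|t| > k`, and sending each remaining `t` to a `k`-set `α ⊇ t` gives the
decomposition `F x = ∑_α f̂_α x_α`.

For the `L¹` bounds, `μ` may be replaced by the product measure `π = ⊗ ν_i`. The map
`(z, x) ↦ (x_s, z_sᶜ)` sends `π ⊗ π` to `π`, so averaging over `z` shows that some anchor has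
`∑_s ‖F (·_s, z_sᶜ)‖_{L¹(π)} ≤ 2ⁿ ‖F‖_{L¹(π)}`; each `f̂_α` is a signed sum of such slices.
-/

open Finset MeasureTheory ProbabilityTheory
open scoped ENNReal NNReal

namespace Finset

variable {ι G : Type*} [DecidableEq ι] [AddCommGroup G]

def moebiusSum (f : Finset ι → G) (t : Finset ι) : G :=
  ∑ s ∈ t.powerset, (-1 : ℤ) ^ #(t \ s) • f s

theorem moebiusSum_insert {f : Finset ι → G} {a : ι} {t : Finset ι} (ha : a ∉ t) :
    moebiusSum f (insert a t) = moebiusSum (fun s => f (insert a s)) t - moebiusSum f t := by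
  rw [moebiusSum, sum_powerset_insert ha, add_comm, sub_eq_add_neg, moebiusSum, moebiusSum,
    ← sum_neg_distrib]
  congr 1 <;> refine sum_congr rfl fun s hs => ?_
  · have hs' : a ∉ s := fun h => ha (mem_powerset.1 hs h)
    rw [insert_sdiff_insert, sdiff_insert_of_notMem ha]
  · have hs' : a ∉ s := fun h => ha (mem_powerset.1 hs h)
    rw [insert_sdiff_of_notMem _ hs', card_insert_of_notMem (fun h => ha (mem_sdiff.1 h).1),
      pow_succ, mul_neg_one, neg_smul]

theorem sum_powerset_moebiusSum (f : Finset ι → G) (s : Finset ι) :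
    ∑ t ∈ s.powerset, moebiusSum f t = f s := by
  induction s using Finset.induction_on generalizing f with
  | empty => simp [moebiusSum]
  | insert a s ha ih =>
    rw [sum_powerset_insert ha, ← ih (fun t => f (insert a t)), ← sum_add_distrib]
    refine sum_congr rfl fun t ht => ?_
    rw [moebiusSum_insert fun h => ha (mem_powerset.1 ht h), add_sub_cancel]

theorem moebiusSum_eq_zero {f : Finset ι → G} {a : ι} {t : Finset ι} (ha : a ∈ t)
    (hf : ∀ s, f (insert a s) = f s) : moebiusSum f t = 0 := by
  rw [← insert_erase ha, moebiusSum_insert (notMem_erase a t)]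
  simp [hf]

theorem moebiusSum_sum {κ : Type*} (S : Finset κ) (f : κ → Finset ι → G) (t : Finset ι) :
    moebiusSum (fun s => ∑ j ∈ S, f j s) t = ∑ j ∈ S, moebiusSum (f j) t := by
  simp_rw [moebiusSum, smul_sum]
  exact sum_comm

end Finset

section Anchored

variable {ι G : Type*} [DecidableEq ι] [AddCommGroup G] {X : ι → Type*}

def anchoredComponent (z : ∀ i, X i) (F : (∀ i, X i) → G) (t : Finset ι) (x : ∀ i, X i) : G :=
  moebiusSum (fun s => F (s.piecewise x z)) t

theorem sum_anchoredComponent [Fintype ι] (z : ∀ i, X i) (F : (∀ i, X i) → G) (x : ∀ i, X i) :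
    ∑ t, anchoredComponent z F t x = F x := by
  rw [← powerset_univ]
  exact (sum_powerset_moebiusSum _ univ).trans (congrArg F (piecewise_univ x z))

theorem dependsOn_anchoredComponent (z : ∀ i, X i) (F : (∀ i, X i) → G) (t : Finset ι) :
    DependsOn (anchoredComponent z F t) t := by
  intro x y hxy
  refine sum_congr rfl fun s hs => ?_
  congr 1
  exact congrArg F <| piecewise_congr _ (fun i hi => hxy i (mem_powerset.1 hs hi)) fun _ _ => rfl

theorem anchoredComponent_eq_zero {F : (∀ i, X i) → G} {u : Set ι} (hF : DependsOn F u)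
    {t : Finset ι} (ht : ¬ (t : Set ι) ⊆ u) (z : ∀ i, X i) : anchoredComponent z F t = 0 := by
  obtain ⟨a, hat, hau⟩ := Set.not_subset.1 ht
  funext x
  refine moebiusSum_eq_zero hat fun s => hF fun i hi => ?_
  have : i ≠ a := fun h => hau (h ▸ hi)
  simp [piecewise, this]

theorem anchoredComponent_sum {κ : Type*} (S : Finset κ) (F : κ → (∀ i, X i) → G)
    (z : ∀ i, X i) (t : Finset ι) (x : ∀ i, X i) :
    anchoredComponent z (fun y => ∑ j ∈ S, F j y) t x = ∑ j ∈ S, anchoredComponent z (F j) t x :=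
  moebiusSum_sum S _ t

theorem anchoredComponent_eq_zero_of_card_lt [Fintype ι] {k : ℕ} {F : (∀ i, X i) → G}
    {f : ∀ γ : Finset ι, ((i : γ) → X i) → G}
    (hF : ∀ x, F x = ∑ γ ∈ powersetCard k univ, f γ (γ.restrict x)) (z : ∀ i, X i)
    {t : Finset ι} (ht : k < #t) : anchoredComponent z F t = 0 := by
  funext x
  rw [show F = fun x => ∑ γ ∈ powersetCard k univ, f γ (γ.restrict x) from funext hF,
    anchoredComponent_sum]
  refine sum_eq_zero fun γ hγ => ?_
  refine congrFun (anchoredComponent_eq_zero (u := γ) (fun x y h => ?_) (fun hsub => ?_) z) x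
  · congr 1; funext i; exact h i i.2
  · have := card_le_card (coe_subset.1 hsub)
    rw [(mem_powersetCard.1 hγ).2] at this
    omega

theorem exists_sum_anchoredComponent_eq [Fintype ι] {k : ℕ} (hk : k ≤ Fintype.card ι)
    {F : (∀ i, X i) → G} {z : ∀ i, X i}
    (hF : ∀ t : Finset ι, k < #t → anchoredComponent z F t = 0) :
    ∃ P : Finset ι → Finset (Finset ι), (∀ α, ∀ t ∈ P α, t ⊆ α) ∧
      ∀ x, F x = ∑ α ∈ powersetCard k univ, ∑ t ∈ P α,
        anchoredComponent z F t (Function.updateFinset z α (α.restrict x)) := by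
  have hup : ∀ t : Finset ι, #t ≤ k → ∃ α, t ⊆ α ∧ α ⊆ univ ∧ #α = k := fun t ht =>
    exists_subsuperset_card_eq (subset_univ t) ht (by rwa [card_univ])
  choose! up hup using hup
  have hP : ∀ α, ∀ t ∈ ({t | #t ≤ k ∧ up t = α} : Finset (Finset ι)), t ⊆ α := fun α t ht => by
    obtain ⟨htk, rfl⟩ := (mem_filter.1 ht).2
    exact (hup t htk).1
  refine ⟨fun α => {t | #t ≤ k ∧ up t = α}, hP, fun x => ?_⟩
  rw [← sum_anchoredComponent z F x, ← sum_filter_of_ne (p := fun t => #t ≤ k) fun t _ h => ?_,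
    ← sum_fiberwise_of_maps_to (g := up) (t := powersetCard k univ)]
  · refine sum_congr rfl fun α _ => sum_congr (by ext t; simp) fun t ht =>
      dependsOn_anchoredComponent z F t fun i hi => ?_
    simp [Function.updateFinset, hP α t (by simpa using ht) hi]
  · intro t ht
    exact mem_powersetCard.2 ⟨subset_univ _, (hup t (mem_filter.1 ht).2).2.2⟩
  · by_contra hkt
    exact h (congrFun (hF t (not_le.1 hkt)) x)

end Anchored

namespace MeasureTheory

section Sections

variable {α β γ : Type*} [MeasurableSpace α] [MeasurableSpace β] [MeasurableSpace γ]

noncomputable def sectionKernel (ν : Measure β) (T : α × β → γ) : Kernel α γ :=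
  (Kernel.id ×ₖ Kernel.const α ν).map T

variable {E : Type*} [NormedAddCommGroup E] {μ : Measure α} {ν : Measure β} {ρ : Measure γ}
  [SFinite μ] [SFinite ν] {T : α × β → γ}

theorem sectionKernel_apply (hT : Measurable T) (z : α) :
    sectionKernel ν T z = ν.map fun x => T (z, x) := by
  rw [sectionKernel, Kernel.map_apply _ hT, Kernel.prod_apply, Kernel.id_apply,
    Kernel.const_apply, Measure.dirac_prod, Measure.map_map hT measurable_prodMk_left]
  rfl

theorem MeasurePreserving.sectionKernel_comp (hT : MeasurePreserving T (μ.prod ν) ρ) :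
    sectionKernel ν T ∘ₘ μ = ρ := by
  rw [sectionKernel, ← Measure.map_comp _ _ hT.measurable, ← Measure.compProd_eq_comp_prod,
    Measure.compProd_const, hT.map_eq]

theorem MeasurePreserving.ae_integrable_map_section (hT : MeasurePreserving T (μ.prod ν) ρ)
    {F : γ → E} (hF : Integrable F ρ) :
    ∀ᵐ z ∂μ, Integrable F (ν.map fun x => T (z, x)) := by
  rw [← hT.sectionKernel_comp] at hF
  simpa only [sectionKernel_apply hT.measurable] using Measure.ae_integrable_of_integrable_comp hF

theorem MeasurePreserving.integrable_integral_norm_map_section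
    (hT : MeasurePreserving T (μ.prod ν) ρ) {F : γ → E} (hF : Integrable F ρ) :
    Integrable (fun z => ∫ y, ‖F y‖ ∂ν.map fun x => T (z, x)) μ := by
  rw [← hT.sectionKernel_comp] at hF
  simpa only [sectionKernel_apply hT.measurable] using
    Measure.integrable_integral_norm_of_integrable_comp hF

theorem MeasurePreserving.integral_integral_norm_map_section
    (hT : MeasurePreserving T (μ.prod ν) ρ) {F : γ → E} (hF : Integrable F ρ) :
    ∫ z, ∫ y, ‖F y‖ ∂(ν.map fun x => T (z, x)) ∂μ = ∫ y, ‖F y‖ ∂ρ := by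
  rw [← hT.sectionKernel_comp, Measure.comp_eq_comp_const_apply] at hF ⊢
  rw [Kernel.integral_comp hF.norm, Kernel.const_apply]
  exact integral_congr_ae (ae_of_all _ fun z => by simp only [sectionKernel_apply hT.measurable])

end Sections

section Comparison

variable {α E : Type*} [MeasurableSpace α] [NormedAddCommGroup E] {μ ν : Measure α}

theorem integral_norm_sum_le {κ : Type*} {s : Finset κ} {f : κ → α → E}
    (hf : ∀ j ∈ s, Integrable (f j) μ) :
    ∫ x, ‖∑ j ∈ s, f j x‖ ∂μ ≤ ∑ j ∈ s, ∫ x, ‖f j x‖ ∂μ := by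
  rw [← integral_finsetSum _ fun j hj => (hf j hj).norm]
  exact integral_mono (integrable_finsetSum _ hf).norm
    (integrable_finsetSum _ fun j hj => (hf j hj).norm) fun x => norm_sum_le _ _

theorem Integrable.mono_smul_measure {C : ℝ≥0} (h : μ ≤ (C : ℝ≥0∞) • ν) {f : α → E}
    (hf : Integrable f ν) : Integrable f μ :=
  (hf.smul_measure ENNReal.coe_ne_top).mono_measure h

theorem integral_norm_le_of_le_smul {C : ℝ≥0} (h : μ ≤ (C : ℝ≥0∞) • ν) {f : α → E}
    (hf : Integrable f ν) : ∫ x, ‖f x‖ ∂μ ≤ C * ∫ x, ‖f x‖ ∂ν :=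
  calc ∫ x, ‖f x‖ ∂μ ≤ ∫ x, ‖f x‖ ∂((C : ℝ≥0∞) • ν) := integral_mono_measure h
        (ae_of_all _ fun _ => norm_nonneg _) (hf.smul_measure ENNReal.coe_ne_top).norm
    _ = C * ∫ x, ‖f x‖ ∂ν := by simp [NNReal.smul_def]

theorem Measure.map_le_smul_map {β : Type*} [MeasurableSpace β] {C : ℝ≥0}
    (h : μ ≤ (C : ℝ≥0∞) • ν) {f : α → β} (hf : Measurable f) :
    μ.map f ≤ (C : ℝ≥0∞) • ν.map f := by
  rw [← Measure.map_smul]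
  exact Measure.map_mono h hf

theorem withDensity_le_smul {ρ : α → ℝ≥0∞} {C : ℝ≥0∞} (h : ∀ x, ρ x ≤ C) :
    μ.withDensity ρ ≤ C • μ :=
  withDensity_const (μ := μ) C ▸ withDensity_mono (ae_of_all _ h)

theorem le_inv_smul_withDensity {ρ : α → ℝ≥0∞} {c : ℝ≥0} (hc : c ≠ 0)
    (h : ∀ x, (c : ℝ≥0∞) ≤ ρ x) : μ ≤ ((c⁻¹ : ℝ≥0) : ℝ≥0∞) • μ.withDensity ρ := by
  have hle : (c : ℝ≥0∞) • μ ≤ μ.withDensity ρ :=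
    withDensity_const (μ := μ) (c : ℝ≥0∞) ▸ withDensity_mono (ae_of_all _ h)
  calc μ = ((c⁻¹ : ℝ≥0) : ℝ≥0∞) • (c : ℝ≥0∞) • μ := by
        rw [smul_smul, ← ENNReal.coe_mul, inv_mul_cancel₀ hc, ENNReal.coe_one, one_smul]
    _ ≤ ((c⁻¹ : ℝ≥0) : ℝ≥0∞) • μ.withDensity ρ := by gcongr

end Comparison

section Anchor

variable {ι E : Type*} [DecidableEq ι] [NormedAddCommGroup E] {X : ι → Type*}
  [∀ i, MeasurableSpace (X i)]

theorem measurable_piecewise_prod (s : Finset ι) :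
    Measurable fun p : (∀ i, X i) × (∀ i, X i) => s.piecewise p.2 p.1 := by
  refine measurable_pi_lambda _ fun i => ?_
  by_cases hi : i ∈ s
  · simp only [piecewise_eq_of_mem _ _ _ hi]; fun_prop
  · simp only [piecewise_eq_of_notMem _ _ _ hi]; fun_prop

theorem measurePreserving_piecewise [Fintype ι] (ν : ∀ i, Measure (X i))
    [∀ i, IsProbabilityMeasure (ν i)] (s : Finset ι) :
    MeasurePreserving (fun p : (∀ i, X i) × (∀ i, X i) => s.piecewise p.2 p.1)
      ((Measure.pi ν).prod (Measure.pi ν)) (Measure.pi ν) := by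
  refine ⟨measurable_piecewise_prod s, (Measure.pi_eq fun A hA => ?_).symm⟩
  have hpre : (fun p : (∀ i, X i) × (∀ i, X i) => s.piecewise p.2 p.1) ⁻¹' Set.univ.pi A =
      Set.univ.pi (fun i => if i ∈ s then Set.univ else A i) ×ˢ
        Set.univ.pi (fun i => if i ∈ s then A i else Set.univ) := by
    ext p
    simp only [Set.mem_preimage, Set.mem_pi, Set.mem_univ, true_implies, Set.mem_prod,
      ← forall_and]
    exact forall_congr' fun i => by by_cases hi : i ∈ s <;> simp [hi]
  rw [Measure.map_apply (measurable_piecewise_prod s) (.univ_pi hA), hpre, Measure.prod_prod,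
    Measure.pi_pi, Measure.pi_pi, ← prod_mul_distrib]
  refine prod_congr rfl fun i _ => ?_
  by_cases hi : i ∈ s <;> simp [hi]

/- Integrability is asked of `F` under the law of `(x_s, z_sᶜ)`, not of `F (·_s, z_sᶜ)` under
`π`: only the former transfers to the marginals of `π`. -/
theorem exists_anchor_integrable_map_piecewise [Fintype ι] (ν : ∀ i, Measure (X i))
    [∀ i, IsProbabilityMeasure (ν i)] {F : (∀ i, X i) → E} (hF : Integrable F (Measure.pi ν)) :
    ∃ z : ∀ i, X i, (∀ s : Finset ι, Integrable F ((Measure.pi ν).map (s.piecewise · z))) ∧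
      ∑ s : Finset ι, ∫ y, ‖F y‖ ∂(Measure.pi ν).map (s.piecewise · z) ≤
        2 ^ Fintype.card ι * ∫ y, ‖F y‖ ∂Measure.pi ν := by
  have hT := measurePreserving_piecewise ν
  have hgood : ∀ᵐ z ∂Measure.pi ν, ∀ s : Finset ι,
      Integrable F ((Measure.pi ν).map (s.piecewise · z)) :=
    ae_all_iff.2 fun s => (hT s).ae_integrable_map_section hF
  have hint := integrable_finsetSum univ fun s _ => (hT s).integrable_integral_norm_map_section hF
  obtain ⟨z, hz, hle⟩ := exists_notMem_null_le_integral hint (ae_iff.1 hgood)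
  refine ⟨z, not_not.1 hz, hle.trans_eq ?_⟩
  rw [integral_finsetSum _ fun s _ => (hT s).integrable_integral_norm_map_section hF]
  simp only [(hT _).integral_integral_norm_map_section hF, sum_const, card_univ,
    Fintype.card_finset, nsmul_eq_mul, Nat.cast_pow, Nat.cast_ofNat]

theorem measurable_piecewise_updateFinset (z : ∀ i, X i) (s α : Finset ι) :
    Measurable fun y => s.piecewise (Function.updateFinset z α y) z :=
  (measurable_piecewise_prod s).comp (measurable_const.prodMk measurable_updateFinset)

theorem map_piecewise_updateFinset_map_restrict {m : Measure (∀ i, X i)} (z : ∀ i, X i)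
    {s α : Finset ι} (hsα : s ⊆ α) :
    (m.map α.restrict).map (fun y => s.piecewise (Function.updateFinset z α y) z) =
      m.map (s.piecewise · z) := by
  rw [Measure.map_map (measurable_piecewise_updateFinset z s α) (Finset.measurable_restrict α)]
  congr 1
  funext x
  exact piecewise_congr _ (fun i hi => by simp [Function.updateFinset, hsα hi]) fun _ _ => rfl

theorem integrable_anchoredComponent_updateFinset_and_integral_norm_le
    {m : Measure (∀ i, X i)} {z : ∀ i, X i} {t α : Finset ι} (htα : t ⊆ α) {F : (∀ i, X i) → E}
    (hF : ∀ s ∈ t.powerset, Integrable F (m.map (s.piecewise · z))) :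
    Integrable (fun y => anchoredComponent z F t (Function.updateFinset z α y))
        (m.map α.restrict) ∧
      ∫ y, ‖anchoredComponent z F t (Function.updateFinset z α y)‖ ∂m.map α.restrict ≤
        ∑ s ∈ t.powerset, ∫ y, ‖F y‖ ∂m.map (s.piecewise · z) := by
  have hterm : ∀ s ∈ t.powerset, Integrable (fun y => (-1 : ℤ) ^ #(t \ s) •
      F (s.piecewise (Function.updateFinset z α y) z)) (m.map α.restrict) ∧
      ∫ y, ‖(-1 : ℤ) ^ #(t \ s) • F (s.piecewise (Function.updateFinset z α y) z)‖
        ∂m.map α.restrict = ∫ y, ‖F y‖ ∂m.map (s.piecewise · z) := by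
    intro s hs
    have hU := measurable_piecewise_updateFinset z s α
    have hFs := hF s hs
    rw [← map_piecewise_updateFinset_map_restrict z ((mem_powerset.1 hs).trans htα)] at hFs ⊢
    have hint := hFs.comp_measurable hU
    have heq := (integral_map hU.aemeasurable hFs.norm.1).symm
    rcases neg_one_pow_eq_or ℤ #(t \ s) with h | h <;>
      simp only [h, one_smul, neg_smul, norm_neg] <;>
      exact ⟨by simpa [Function.comp_def] using hint, heq⟩
  refine ⟨integrable_finsetSum _ fun s hs => (hterm s hs).1, ?_⟩
  exact (integral_norm_sum_le fun s hs => (hterm s hs).1).trans_eq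
    (sum_congr rfl fun s hs => (hterm s hs).2)

theorem integrable_sum_anchoredComponent_updateFinset_and_integral_norm_le [Fintype ι]
    {μ π : Measure (∀ i, X i)} {C : ℝ≥0} (hμ : μ ≤ (C : ℝ≥0∞) • π) {z : ∀ i, X i}
    {F : (∀ i, X i) → E} (hz : ∀ s : Finset ι, Integrable F (π.map (s.piecewise · z)))
    {α : Finset ι} {P : Finset (Finset ι)} (hP : ∀ t ∈ P, t ⊆ α) :
    Integrable (fun y => ∑ t ∈ P, anchoredComponent z F t (Function.updateFinset z α y))
        (μ.map α.restrict) ∧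
      ∫ y, ‖∑ t ∈ P, anchoredComponent z F t (Function.updateFinset z α y)‖ ∂μ.map α.restrict ≤
        2 ^ Fintype.card ι * (C * ∑ s : Finset ι, ∫ y, ‖F y‖ ∂π.map (s.piecewise · z)) := by
  have hmap : ∀ s : Finset ι, μ.map (s.piecewise · z) ≤ (C : ℝ≥0∞) • π.map (s.piecewise · z) :=
    fun s => Measure.map_le_smul_map hμ ((measurable_piecewise_prod s).comp measurable_prodMk_left)
  have hterm := fun t ht => integrable_anchoredComponent_updateFinset_and_integral_norm_le
    (hP t ht) fun s _ => (hz s).mono_smul_measure (hmap s)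
  have hcard : (#P : ℝ) ≤ 2 ^ Fintype.card ι := by
    have := (card_le_card fun t ht => mem_powerset.2 (hP t ht)).trans_eq (card_powerset α)
    exact_mod_cast this.trans (Nat.pow_le_pow_right two_pos (card_le_univ α))
  refine ⟨integrable_finsetSum _ fun t ht => (hterm t ht).1, ?_⟩
  calc _ ≤ ∑ t ∈ P, ∑ s ∈ t.powerset, ∫ y, ‖F y‖ ∂μ.map (s.piecewise · z) :=
        (integral_norm_sum_le fun t ht => (hterm t ht).1).trans
          (sum_le_sum fun t ht => (hterm t ht).2)
    _ ≤ ∑ _t ∈ P, ∑ s : Finset ι, C * ∫ y, ‖F y‖ ∂π.map (s.piecewise · z) :=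
        sum_le_sum fun t _ =>
          (sum_le_sum fun s _ => integral_norm_le_of_le_smul (hmap s) (hz s)).trans
            (sum_le_sum_of_subset_of_nonneg (subset_univ _) fun _ _ _ => by positivity)
    _ ≤ _ := by
        rw [sum_const, nsmul_eq_mul, ← mul_sum]
        gcongr

end Anchor

end MeasureTheory

theorem statement12_general (n k : ℕ) (hkn : k < n)
    (X : Fin n → Type)
    [∀ i, MeasurableSpace (X i)]
    (μ : Measure (∀ i, X i))
    (hred : ∃ ν : ∀ i, Measure (X i), (∀ i, IsProbabilityMeasure (ν i)) ∧
      ∃ ρ : (∀ i, X i) → ℝ≥0∞, μ = (Measure.pi ν).withDensity ρ ∧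
        ∃ c C : ℝ, 0 < c ∧ ∀ x, ENNReal.ofReal c ≤ ρ x ∧ ρ x ≤ ENNReal.ofReal C) :
    ∃ Cμ : ℝ,
      ∀ F : (∀ i, X i) → ℝ,
        Integrable F μ →
        (∃ f : (α : Finset (Fin n)) → ((i : α) → X i) → ℝ,
          ∀ x : ∀ i, X i,
            F x = ∑ α ∈ Finset.powersetCard k (Finset.univ : Finset (Fin n)),
              f α (fun i => x i)) →
        ∃ g : (α : Finset (Fin n)) → ((i : α) → X i) → ℝ,
          (∀ α ∈ Finset.powersetCard k (Finset.univ : Finset (Fin n)),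
            Integrable (g α) (Measure.map (fun (x : ∀ i, X i) (i : α) => x i) μ) ∧
            ∫ y, |g α y| ∂(Measure.map (fun (x : ∀ i, X i) (i : α) => x i) μ) ≤
              Cμ * ∫ x, |F x| ∂μ) ∧
          ∀ x : ∀ i, X i,
            F x = ∑ α ∈ Finset.powersetCard k (Finset.univ : Finset (Fin n)),
              g α (fun i => x i) := by
  obtain ⟨ν, hν, ρ, rfl, c, C, hc, hρ⟩ := hred
  have hle : (Measure.pi ν).withDensity ρ ≤ (C.toNNReal : ℝ≥0∞) • Measure.pi ν :=
    withDensity_le_smul fun x => (hρ x).2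
  have hge : Measure.pi ν ≤ ((c.toNNReal⁻¹ : ℝ≥0) : ℝ≥0∞) • (Measure.pi ν).withDensity ρ :=
    le_inv_smul_withDensity (by simpa using hc) fun x => (hρ x).1
  refine ⟨2 ^ (2 * n) * C.toNNReal * c.toNNReal⁻¹, fun F hF ⟨f, hf⟩ => ?_⟩
  have hFπ := hF.mono_smul_measure hge
  obtain ⟨z, hz, hz_sum⟩ := exists_anchor_integrable_map_piecewise ν hFπ
  obtain ⟨P, hP, hFP⟩ := exists_sum_anchoredComponent_eq (by simpa using hkn.le)
    fun t ht => anchoredComponent_eq_zero_of_card_lt hf z ht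
  refine ⟨fun α y => ∑ t ∈ P α, anchoredComponent z F t (Function.updateFinset z α y),
    fun α _ => ?_, hFP⟩
  obtain ⟨hint, hbound⟩ :=
    integrable_sum_anchoredComponent_updateFinset_and_integral_norm_le hle hz (hP α)
  refine ⟨hint, ?_⟩
  simp only [← Real.norm_eq_abs]
  calc _ ≤ 2 ^ n * (C.toNNReal * (2 ^ n * (c.toNNReal⁻¹ *
        ∫ x, ‖F x‖ ∂(Measure.pi ν).withDensity ρ))) := by
        refine hbound.trans ?_
        simp only [Fintype.card_fin] at hz_sum ⊢
        gcongr
        exact hz_sum.trans (by gcongr; exact integral_norm_le_of_le_smul hge hF)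
    _ = _ := by push_cast; ring

/-- for a reducible probability measure `μ` on a product of Polish spaces, with
marginals `μ_α = (pr_α)_*μ` for `|α| = k`, there is a constant `C_μ` such that every integrable
finite `(n,k)`-function `F ∈ L¹(μ)` can be decomposed as `F(x) = Σ_{|α|=k} f̂_α(x_α)` with each
`f̂_α ∈ L¹(μ_α)` and `‖f̂_α‖_{L¹(μ_α)} ≤ C_μ·‖F‖_{L¹(μ)}`. -/
theorem statement12 (n k : ℕ) (hk : 1 ≤ k) (hkn : k < n)
    (X : Fin n → Type)
    [∀ i, TopologicalSpace (X i)] [∀ i, PolishSpace (X i)]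
    [∀ i, MeasurableSpace (X i)] [∀ i, BorelSpace (X i)]
    (μ : Measure (∀ i, X i)) [IsProbabilityMeasure μ]
    (hred : ∃ ν : ∀ i, Measure (X i), (∀ i, IsProbabilityMeasure (ν i)) ∧
      ∃ ρ : (∀ i, X i) → ℝ≥0∞, μ = (Measure.pi ν).withDensity ρ ∧
        ∃ c C : ℝ, 0 < c ∧ ∀ x, ENNReal.ofReal c ≤ ρ x ∧ ρ x ≤ ENNReal.ofReal C) :
    ∃ Cμ : ℝ,
      ∀ F : (∀ i, X i) → ℝ,
        Integrable F μ →
        (∃ f : (α : Finset (Fin n)) → ((i : α) → X i) → ℝ,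
          ∀ x : ∀ i, X i,
            F x = ∑ α ∈ Finset.powersetCard k (Finset.univ : Finset (Fin n)),
              f α (fun i => x i)) →
        ∃ g : (α : Finset (Fin n)) → ((i : α) → X i) → ℝ,
          (∀ α ∈ Finset.powersetCard k (Finset.univ : Finset (Fin n)),
            Integrable (g α) (Measure.map (fun (x : ∀ i, X i) (i : α) => x i) μ) ∧
            ∫ y, |g α y| ∂(Measure.map (fun (x : ∀ i, X i) (i : α) => x i) μ) ≤
              Cμ * ∫ x, |F x| ∂μ) ∧
          ∀ x : ∀ i, X i,
            F x = ∑ α ∈ Finset.powersetCard k (Finset.univ : Finset (Fin n)),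
              g α (fun i => x i) :=
  statement12_general n k hkn X μ hred
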